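/- arXiv:1708.06782 — 2 statements merged into one kernel-verified Lean document; each statement's English description precedes it below -/
import Mathlib

section
/- Let μ < λ be regular cardinals with λ > 2^{<μ}. If for every θ < λ the cofinality of the poset ([θ]^{<μ}, ⊆) is less than λ, then λ is μ-closed, i.e., θ^{<μ} < λ for all θ < λ. -/
open Cardinal

universe u

/-- The cofinality of the poset `([θ]^{<μ}, ⊆)`. -/
noncomputable def smallSubsetCof (μ θ : Cardinal.{u}) : Cardinal.{u} :=
  sInf { c | ∃ F : Set (Set θ.out), (∀ s ∈ F, #s < μ) ∧ #F = c ∧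
    ∀ s : Set θ.out, #s < μ → ∃ t ∈ F, s ⊆ t }

/-!
Fix a cofinal family `F ⊆ [θ]^{<μ}` of size `cf([θ]^{<μ})`. For `κ < μ`, every `f : κ → θ` has
range of size `< μ`, hence lands in some `t ∈ F`, so `θ^κ ≤ Σ_{t ∈ F} |t|^κ`. Each summand is at
most `2^{|t|·κ} ≤ 2^{<μ}`, so `θ^{<μ} ≤ cf([θ]^{<μ}) · 2^{<μ}`, and both factors are below `λ`.
-/

lemma exists_cofinal_family_card_eq_smallSubsetCof (μ θ : Cardinal.{u}) :
    ∃ F : Set (Set θ.out), (∀ s ∈ F, #s < μ) ∧ #F = smallSubsetCof μ θ ∧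
      ∀ s : Set θ.out, #s < μ → ∃ t ∈ F, s ⊆ t :=
  csInf_mem (s := {c | ∃ F : Set (Set θ.out), (∀ s ∈ F, #s < μ) ∧ #F = c ∧
      ∀ s : Set θ.out, #s < μ → ∃ t ∈ F, s ⊆ t})
    ⟨_, {s | #s < μ}, fun _ hs => hs, rfl, fun s hs => ⟨s, hs, subset_rfl⟩⟩

lemma mk_arrow_le_sum_of_cofinal {α ι : Type u} {μ : Cardinal.{u}} (F : Set (Set α))
    (hF : ∀ s : Set α, #s < μ → ∃ t ∈ F, s ⊆ t) (hι : #ι < μ) :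
    #(ι → α) ≤ sum fun t : F => #(t : Set α) ^ #ι := by
  choose T hTF hTsub using fun f : ι → α => hF (Set.range f) (mk_range_le.trans_lt hι)
  have hinj : Function.Injective fun f : ι → α =>
      (⟨⟨T f, hTF f⟩, fun i => ⟨f i, hTsub f (Set.mem_range_self i)⟩⟩ :
        Σ t : F, ι → (t : Set α)) := by
    intro f g hfg
    exact congrArg (fun p : Σ t : F, ι → (t : Set α) => fun i => (p.2 i : α)) hfg
  simpa only [mk_sigma, power_def] using mk_le_of_injective hinj

lemma power_le_powerlt_two {μ a κ : Cardinal} (hμ : ℵ₀ ≤ μ) (ha : a < μ) (hκ : κ < μ) :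
    a ^ κ ≤ 2 ^< μ :=
  calc a ^ κ ≤ (2 ^ a) ^ κ := power_le_power_right (cantor a).le
    _ = 2 ^ (a * κ) := by rw [power_mul]
    _ ≤ 2 ^< μ := le_powerlt 2 (mul_lt_of_lt hμ ha hκ)

lemma powerlt_le_smallSubsetCof_mul {μ : Cardinal.{u}} (hμ : ℵ₀ ≤ μ) (θ : Cardinal.{u}) :
    θ ^< μ ≤ smallSubsetCof μ θ * 2 ^< μ := by
  obtain ⟨F, hF_small, hF_card, hF_cofinal⟩ := exists_cofinal_family_card_eq_smallSubsetCof μ θ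
  refine powerlt_le.2 fun κ hκ => ?_
  calc θ ^ κ = #(κ.out → θ.out) := by rw [← power_def, mk_out, mk_out]
    _ ≤ sum fun t : F => #(t : Set θ.out) ^ #κ.out :=
      mk_arrow_le_sum_of_cofinal F hF_cofinal (by rwa [mk_out])
    _ ≤ sum fun _ : F => 2 ^< μ :=
      sum_le_sum _ _ fun t => power_le_powerlt_two hμ (hF_small t t.2) (by rwa [mk_out])
    _ = smallSubsetCof μ θ * 2 ^< μ := by rw [sum_const', hF_card]

theorem stmt2_general (μ l : Cardinal.{u}) (hμ : μ.IsRegular) (hl : l.IsRegular)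
    (h2 : 2 ^< μ < l) (hcof : ∀ θ < l, smallSubsetCof μ θ < l) :
    ∀ θ < l, θ ^< μ < l := fun θ hθ =>
  (powerlt_le_smallSubsetCof_mul hμ.aleph0_le θ).trans_lt
    (mul_lt_of_lt hl.aleph0_le (hcof θ hθ) h2)

/-- If `μ < λ` are regular, `λ > 2^{<μ}`, and the cofinality of `([θ]^{<μ}, ⊆)` is less
than `λ` for all `θ < λ`, then `λ` is `μ`-closed. -/
theorem stmt2 (μ l : Cardinal.{u}) (hμ : μ.IsRegular) (hl : l.IsRegular) (hμl : μ < l)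
    (h2 : 2 ^< μ < l) (hcof : ∀ θ < l, smallSubsetCof μ θ < l) :
    ∀ θ < l, θ ^< μ < l :=
  stmt2_general μ l hμ hl h2 hcof
end

section
/- Let μ ≤ λ be infinite cardinals with μ regular and cf(λ) ≥ μ. Then λ^{<μ} is the least almost μ-closed cardinal λ' ≥ λ, where a cardinal λ' is almost μ-closed if θ^{<μ} ≤ λ' for all θ < λ'. -/
open Cardinal

universe u

/-- A cardinal `ν` is almost `μ`-closed if `θ^{<μ} ≤ ν` for all `θ < ν`. -/
def AlmostMuClosed (μ ν : Cardinal.{u}) : Prop := ∀ θ < ν, θ ^< μ ≤ ν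

/-!
Every `θ < λ^{<μ}` lies below some `λ^κ₀` with `κ₀ < μ`, and then for `κ < μ` we get
`θ^κ ≤ λ^(κ₀·κ) ≤ λ^{<μ}` because `κ₀·κ < μ`; so `λ^{<μ}` is almost `μ`-closed, and it is
`≥ λ^1 = λ`. Conversely, if `λ ≤ λ'` is almost `μ`-closed and `κ < μ ≤ cf(λ)`, every function
`κ → λ` is bounded below `λ`, so `λ^κ ≤ Σ_{α<λ} |α|^κ ≤ λ · λ' = λ'`.
-/

namespace Cardinal

theorem exists_forall_lt_of_mk_lt_cof {ι α : Type u} [LinearOrder α] (f : ι → α)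
    (h : #ι < Order.cof α) : ∃ a, ∀ i, f i < a := by
  by_contra! hf
  refine (h.trans_le' ?_).false
  have hcof : IsCofinal (Set.range f) := fun a ↦ (hf a).elim fun i hi ↦ ⟨f i, ⟨i, rfl⟩, hi⟩
  exact (Order.cof_le hcof).trans mk_range_le

theorem mk_pi_le_sum_mk_pi_Iio {ι α : Type u} [LinearOrder α] (h : #ι < Order.cof α) :
    #(ι → α) ≤ sum fun a : α ↦ #(ι → Set.Iio a) := by
  choose F hF using fun f : ι → α ↦ exists_forall_lt_of_mk_lt_cof f h
  rw [← mk_sigma]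
  refine mk_le_of_injective (f := fun f ↦ ⟨F f, fun i ↦ ⟨f i, hF f i⟩⟩) fun f g hfg ↦ ?_
  funext i
  exact congrArg (fun p : Σ a : α, ι → Set.Iio a ↦ (p.2 i : α)) hfg

theorem power_le_of_lt_cof {κ l l' : Cardinal.{u}} (hκ : κ < l.ord.cof) (hl : ℵ₀ ≤ l)
    (hll' : l ≤ l') (hb : ∀ θ < l, θ ^ κ ≤ l') : l ^ κ ≤ l' := by
  rw [show l ^ κ = #(κ.out → l.ord.ToType) by rw [← power_def, mk_ord_toType, mk_out]]
  calc #(κ.out → l.ord.ToType)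
      ≤ sum fun a : l.ord.ToType ↦ #(κ.out → Set.Iio a) := by
        apply mk_pi_le_sum_mk_pi_Iio
        rwa [mk_out, Ordinal.cof_toType]
    _ ≤ sum fun _ : l.ord.ToType ↦ l' := sum_le_sum _ _ fun a ↦ by
        rw [← power_def, mk_out]
        exact hb _ (by simpa using mk_Iio_lt a)
    _ = l' := by
        rw [sum_const', mk_ord_toType]
        exact mul_eq_right (hl.trans hll') hll' (aleph0_pos.trans_le hl).ne'

theorem exists_lt_power_of_lt_powerlt {a b θ : Cardinal.{u}} (h : θ < a ^< b) :
    ∃ c < b, θ < a ^ c := by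
  by_contra! hc
  exact h.not_ge (powerlt_le.2 hc)

theorem le_powerlt_self (a : Cardinal.{u}) {b : Cardinal.{u}} (hb : 1 < b) : a ≤ a ^< b := by
  simpa using le_powerlt a hb

end Cardinal

theorem almostMuClosed_powerlt {μ : Cardinal.{u}} (hμ : ℵ₀ ≤ μ) (l : Cardinal.{u}) :
    AlmostMuClosed μ (l ^< μ) := fun θ hθ ↦ powerlt_le.2 fun κ hκ ↦ by
  obtain ⟨κ₀, hκ₀, hθκ₀⟩ := exists_lt_power_of_lt_powerlt hθ
  calc θ ^ κ ≤ (l ^ κ₀) ^ κ := power_le_power_right hθκ₀.le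
    _ = l ^ (κ₀ * κ) := power_mul.symm
    _ ≤ l ^< μ := le_powerlt l (mul_lt_of_lt hμ hκ₀ hκ)

theorem AlmostMuClosed.powerlt_le {μ l l' : Cardinal.{u}} (h : AlmostMuClosed μ l')
    (hcf : μ ≤ l.ord.cof) (hl : ℵ₀ ≤ l) (hll' : l ≤ l') : l ^< μ ≤ l' :=
  Cardinal.powerlt_le.2 fun _ hκ ↦ power_le_of_lt_cof (hκ.trans_le hcf) hl hll' fun θ hθ ↦
    (le_powerlt θ hκ).trans (h θ (hθ.trans_le hll'))

theorem stmt3_general (μ l : Cardinal.{u}) (hμ : μ.IsRegular) (hl : ℵ₀ ≤ l)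
    (hcf : μ ≤ l.ord.cof) :
    IsLeast { l' : Cardinal.{u} | l ≤ l' ∧ AlmostMuClosed μ l' } (l ^< μ) := by
  have hμ₀ : ℵ₀ ≤ μ := hμ.aleph0_le
  refine ⟨⟨le_powerlt_self l (one_lt_aleph0.trans_le hμ₀), almostMuClosed_powerlt hμ₀ l⟩, ?_⟩
  rintro l' ⟨hll', hl'⟩
  exact hl'.powerlt_le hcf hl hll'

/-- If `μ ≤ λ` are infinite, `μ` regular, and `cf(λ) ≥ μ`, then `λ^{<μ}` is the least
almost `μ`-closed cardinal `λ' ≥ λ`. -/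
theorem stmt3 (μ l : Cardinal.{u}) (hμ : μ.IsRegular) (hl : ℵ₀ ≤ l) (hμl : μ ≤ l)
    (hcf : μ ≤ l.ord.cof) :
    IsLeast { l' : Cardinal.{u} | l ≤ l' ∧ AlmostMuClosed μ l' } (l ^< μ) :=
  stmt3_general μ l hμ hl hcf
end
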